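/- arXiv:1203.1588 — 2 statements merged into one kernel-verified Lean document; each statement's English description precedes it below -/
import Mathlib

section
/- For nonnegative reals g10, g20, P1, P2, the quantity log(1 + (2·g10·g20·√(P1·P2))/(1 + g10²·P1 + g20²·P2)) converges to log(1 + (2·g10·g20)/(g10² + g20²)) as P1 and P2 tend to infinity with P1 = P2, assuming g10 > 0 and g20 > 0. -/
open Filter Real

theorem asymptotic_sum_rate_gain (g10 g20 : ℝ) (hg10 : 0 < g10) (hg20 : 0 < g20) :
    Tendsto (fun P : ℝ =>
        Real.log (1 + (2 * g10 * g20 * Real.sqrt (P * P)) / (1 + g10 ^ 2 * P + g20 ^ 2 * P)))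
      atTop
      (nhds (Real.log (1 + (2 * g10 * g20) / (g10 ^ 2 + g20 ^ 2)))) := by
  set a : ℝ := 2 * g10 * g20 with ha
  set b : ℝ := g10 ^ 2 + g20 ^ 2 with hb
  have hapos : 0 < a := by positivity
  have hbpos : 0 < b := by positivity
  have hinner : Tendsto (fun P : ℝ => 1 + a / (P⁻¹ + b)) atTop (nhds (1 + a / b)) := by
    have h1 : Tendsto (fun P : ℝ => P⁻¹ + b) atTop (nhds (0 + b)) :=
      tendsto_inv_atTop_zero.add tendsto_const_nhds
    rw [zero_add] at h1
    have := (tendsto_const_nhds (x := a)).div h1 hbpos.ne'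
    exact tendsto_const_nhds.add this
  have hlog : Tendsto (fun P : ℝ => Real.log (1 + a / (P⁻¹ + b))) atTop
      (nhds (Real.log (1 + a / b))) := by
    have hpos : (0:ℝ) < 1 + a / b := by positivity
    exact (Real.continuousAt_log hpos.ne').tendsto.comp hinner
  refine hlog.congr' ?_
  filter_upwards [eventually_gt_atTop (0:ℝ)] with P hP
  have hsq : Real.sqrt (P * P) = P := by
    rw [Real.sqrt_mul_self hP.le]
  have hden : 1 + g10 ^ 2 * P + g20 ^ 2 * P = P * (P⁻¹ + b) := by
    field_simp [hb]; ring
  rw [hsq, hden]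
  congr 1
  rw [mul_comm a P, mul_div_mul_left]
  exact hP.ne'
end

section
/- Let α ∈ (0,1), g12 > g10 > 0 and P > 0. The function R(ρ11) = α·log(1 + g12²·ρ11) + (1−α)·log(1 + g10²·ρ10(ρ11)), where ρ10(ρ11) = (P − α·ρ11)/(1−α), defined on [0, P/α], is concave and attains its maximum at ρ11* = P + (1−α)·(g10⁻² − g12⁻²) if this value lies in [0, P/α]. -/
open Real Set

lemma concave_log_affine {s : Set ℝ} (hs : Convex ℝ s) (a b : ℝ)
    (h : ∀ x ∈ s, 0 < a + b * x) :
    ConcaveOn ℝ s (fun x => Real.log (a + b * x)) := by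
  refine ⟨hs, fun x hx y hy p q hp hq hpq => ?_⟩
  have hlog := (strictConcaveOn_log_Ioi.concaveOn).2 (mem_Ioi.2 (h x hx)) (mem_Ioi.2 (h y hy))
    hp hq hpq
  simp only [smul_eq_mul] at hlog ⊢
  have key : a + b * (p * x + q * y) = p * (a + b * x) + q * (a + b * y) := by
    linear_combination (-a) * hpq
  rw [key]
  exact hlog

lemma key_alg (α c d x xs u us : ℝ) (h : (1 - α) * (u - us) = α * (xs - x))
    (hA : 1 + c * xs ≠ 0) (hB : 1 + d * us ≠ 0) :
    α * ((1 + c * x) / (1 + c * xs) - 1) + (1 - α) * ((1 + d * u) / (1 + d * us) - 1)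
      = α * (x - xs) * (c * (1 + d * us) - d * (1 + c * xs)) / ((1 + c * xs) * (1 + d * us)) := by
  field_simp
  linear_combination (d * (1 + c * xs)) * h

theorem pdf_without_repetition_optimum (α g12 g10 P : ℝ)
    (hα : α ∈ Set.Ioo (0:ℝ) 1) (hg : g10 < g12) (hg10 : 0 < g10) (hP : 0 < P) :
    ConcaveOn ℝ (Set.Icc 0 (P / α))
      (fun ρ11 => α * Real.log (1 + g12 ^ 2 * ρ11) +
        (1 - α) * Real.log (1 + g10 ^ 2 * ((P - α * ρ11) / (1 - α)))) ∧
    (P + (1 - α) * (g10⁻¹ ^ 2 - g12⁻¹ ^ 2) ∈ Set.Icc 0 (P / α) →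
      IsMaxOn
        (fun ρ11 => α * Real.log (1 + g12 ^ 2 * ρ11) +
          (1 - α) * Real.log (1 + g10 ^ 2 * ((P - α * ρ11) / (1 - α))))
        (Set.Icc 0 (P / α))
        (P + (1 - α) * (g10⁻¹ ^ 2 - g12⁻¹ ^ 2))) := by
  obtain ⟨hα0, hα1⟩ := hα
  have hβ : (0:ℝ) < 1 - α := by linarith
  have hg12 : 0 < g12 := lt_trans hg10 hg
  have hc : 0 < g12 ^ 2 := by positivity
  have hd : 0 < g10 ^ 2 := by positivity
  -- positivity on the interval
  have hApos : ∀ x ∈ Icc (0:ℝ) (P / α), 0 < 1 + g12 ^ 2 * x := by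
    intro x hx; nlinarith [hx.1]
  have hBpos : ∀ x ∈ Icc (0:ℝ) (P / α), 0 < 1 + g10 ^ 2 * ((P - α * x) / (1 - α)) := by
    intro x hx
    have hxP : α * x ≤ P := by
      have := hx.2
      rw [le_div_iff₀ hα0] at this
      linarith
    have : 0 ≤ (P - α * x) / (1 - α) := div_nonneg (by linarith) hβ.le
    nlinarith
  have hBeq : ∀ x : ℝ, 1 + g10 ^ 2 * ((P - α * x) / (1 - α))
      = (1 + g10 ^ 2 * P / (1 - α)) + (-(g10 ^ 2 * α / (1 - α))) * x := by
    intro x; field_simp; ring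
  constructor
  · have h1 : ConcaveOn ℝ (Icc (0:ℝ) (P / α)) (fun x => Real.log (1 + g12 ^ 2 * x)) := by
      refine concave_log_affine (convex_Icc _ _) 1 (g12 ^ 2) ?_
      intro x hx; simpa using hApos x hx
    have h2 : ConcaveOn ℝ (Icc (0:ℝ) (P / α))
        (fun x => Real.log (1 + g10 ^ 2 * ((P - α * x) / (1 - α)))) := by
      have := concave_log_affine (convex_Icc (0:ℝ) (P / α))
        (1 + g10 ^ 2 * P / (1 - α)) (-(g10 ^ 2 * α / (1 - α)))
        (fun x hx => by rw [← hBeq]; exact hBpos x hx)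
      refine this.congr fun x hx => ?_
      rw [hBeq]
    exact (h1.smul hα0.le).add (h2.smul hβ.le)
  · intro hxstar
    rw [isMaxOn_iff]
    intro x hx
    set xs := P + (1 - α) * (g10⁻¹ ^ 2 - g12⁻¹ ^ 2) with hxs
    have hA : 0 < 1 + g12 ^ 2 * x := hApos x hx
    have hB : 0 < 1 + g10 ^ 2 * ((P - α * x) / (1 - α)) := hBpos x hx
    have hAs : 0 < 1 + g12 ^ 2 * xs := hApos xs hxstar
    have hBs : 0 < 1 + g10 ^ 2 * ((P - α * xs) / (1 - α)) := hBpos xs hxstar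
    have l1 : Real.log (1 + g12 ^ 2 * x) - Real.log (1 + g12 ^ 2 * xs)
        ≤ (1 + g12 ^ 2 * x) / (1 + g12 ^ 2 * xs) - 1 := by
      rw [← Real.log_div (ne_of_gt hA) (ne_of_gt hAs)]
      exact Real.log_le_sub_one_of_pos (by positivity)
    have l2 : Real.log (1 + g10 ^ 2 * ((P - α * x) / (1 - α)))
        - Real.log (1 + g10 ^ 2 * ((P - α * xs) / (1 - α)))
        ≤ (1 + g10 ^ 2 * ((P - α * x) / (1 - α))) / (1 + g10 ^ 2 * ((P - α * xs) / (1 - α))) - 1 := by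
      rw [← Real.log_div (ne_of_gt hB) (ne_of_gt hBs)]
      exact Real.log_le_sub_one_of_pos (by positivity)
    have key : α * ((1 + g12 ^ 2 * x) / (1 + g12 ^ 2 * xs) - 1)
        + (1 - α) * ((1 + g10 ^ 2 * ((P - α * x) / (1 - α))) / (1 + g10 ^ 2 * ((P - α * xs) / (1 - α))) - 1) = 0 := by
      have hAs' := ne_of_gt hAs
      have hBs' := ne_of_gt hBs
      have hβ' := ne_of_gt hβ
      have hid : g12 ^ 2 * (1 + g10 ^ 2 * ((P - α * xs) / (1 - α)))
          - g10 ^ 2 * (1 + g12 ^ 2 * xs) = 0 := by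
        rw [hxs]
        have h10 : g10 ≠ 0 := ne_of_gt hg10
        have h12 : g12 ≠ 0 := ne_of_gt hg12
        field_simp
        ring
      have hrel : (1 - α) * ((P - α * x) / (1 - α) - (P - α * xs) / (1 - α)) = α * (xs - x) := by
        field_simp
        ring
      have e := key_alg α (g12 ^ 2) (g10 ^ 2) x xs ((P - α * x) / (1 - α))
        ((P - α * xs) / (1 - α)) hrel hAs' hBs'
      rw [e, hid]
      simp
    simp only [ge_iff_le]
    linarith [mul_le_mul_of_nonneg_left l1 hα0.le, mul_le_mul_of_nonneg_left l2 hβ.le, key]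
end
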